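/- Let Ψ = (ψ_i)_{i∈I} be an arbitrary sequence in H. Then the following are equivalent: (a) Ψ is a Riesz-Fischer sequence in H; (b) the closure of the restricted synthesis operator D_Ψ^r is injective and has closed range; (c) the projected sequence π_{H_Ψ}Ψ is a Riesz-Fischer sequence in the Hilbert space H_Ψ; (d) π_{H_Ψ}Ψ is a Riesz-Fischer sequence in H. -/

import Mathlib

noncomputable section

open scoped ENNReal NNReal InnerProductSpace Classical
open TopologicalSpace

local notation "⟪" x ", " y "⟫" => @inner ℂ _ _ x y

section Ops

variable {H₁ H₂ : Type*} [NormedAddCommGroup H₁] [InnerProductSpace ℂ H₁]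
  [NormedAddCommGroup H₂] [InnerProductSpace ℂ H₂]

/-- `T` is bounded from below: there is `m > 0` with `m ‖f‖ ≤ ‖T f‖` for all `f ∈ D(T)`. -/
def LinearPMap.IsBddBelow (T : H₁ →ₗ.[ℂ] H₂) : Prop :=
  ∃ m : ℝ, 0 < m ∧ ∀ f : T.domain, m * ‖(f : H₁)‖ ≤ ‖T f‖

/-- The range of a partially defined operator. -/
def LinearPMap.ran (T : H₁ →ₗ.[ℂ] H₂) : Set H₂ :=
  Set.range fun x : T.domain => T x

/-- `T` is surjective. -/
def LinearPMap.Surj (T : H₁ →ₗ.[ℂ] H₂) : Prop :=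
  ∀ y : H₂, ∃ x : T.domain, T x = y

/-- `T` is injective. -/
def LinearPMap.Inj (T : H₁ →ₗ.[ℂ] H₂) : Prop :=
  ∀ x y : T.domain, T x = T y → x = y

/-- `T` is boundedly invertible (BI): there is an everywhere defined bounded operator
`S : H₂ → H₁` with `T (S g) = g` for all `g ∈ H₂` and `S (T f) = f` for all `f ∈ D(T)`. -/
def LinearPMap.IsBI (T : H₁ →ₗ.[ℂ] H₂) : Prop :=
  ∃ S : H₂ →L[ℂ] H₁, (∀ g : H₂, ∃ hg : S g ∈ T.domain, T ⟨S g, hg⟩ = g) ∧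
    ∀ f : T.domain, S (T f) = (f : H₁)

/-- `T` is boundedly invertible onto its range (BIR): `ran T` is closed and `T`, viewed as an
operator into the Hilbert space `ran T`, is boundedly invertible. -/
def LinearPMap.IsBIR (T : H₁ →ₗ.[ℂ] H₂) : Prop :=
  _root_.IsClosed (T.ran : Set H₂) ∧
  ∃ S : (LinearMap.range T.toFun : Submodule ℂ H₂) →L[ℂ] H₁,
    (∀ g : LinearMap.range T.toFun, ∃ hg : S g ∈ T.domain, T ⟨S g, hg⟩ = (g : H₂)) ∧
    ∀ f : T.domain, S ⟨T f, LinearMap.mem_range_self _ f⟩ = (f : H₁)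

end Ops

section Seq

variable {I : Type*} [Countable I]
variable {H : Type*} [NormedAddCommGroup H] [InnerProductSpace ℂ H]

/-- `ψ` is a lower frame sequence: there is `A > 0` with `A ‖f‖² ≤ ∑ᵢ |⟨f, ψᵢ⟩|²` for all
`f ∈ H`, where the right-hand side is computed in `ℝ≥0∞` (it may be infinite). -/
def IsLowerFrameSeq (ψ : I → H) : Prop :=
  ∃ A : ℝ, 0 < A ∧ ∀ f : H,
    ENNReal.ofReal (A * ‖f‖ ^ 2) ≤ ∑' i, (‖⟪f, ψ i⟫‖₊ : ℝ≥0∞) ^ 2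

/-- `ψ` is a Riesz-Fischer sequence: there is `A > 0` with `A ‖c‖² ≤ ‖∑ᵢ cᵢ ψᵢ‖²` for all
finitely supported scalar sequences `c`. -/
def IsRieszFischerSeq (ψ : I → H) : Prop :=
  ∃ A : ℝ, 0 < A ∧ ∀ c : I →₀ ℂ,
    A * ∑ i ∈ c.support, ‖c i‖ ^ 2 ≤ ‖∑ i ∈ c.support, c i • ψ i‖ ^ 2

/-- `ψ` is minimal: no element lies in the closed span of the remaining ones. -/
def IsMinimalSeq (ψ : I → H) : Prop :=
  ∀ j : I, ψ j ∉ (Submodule.span ℂ (ψ '' {i | i ≠ j})).topologicalClosure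

/-- `ψ` is complete: its closed linear span is all of `H`. -/
def IsCompleteSeq (ψ : I → H) : Prop :=
  (Submodule.span ℂ (Set.range ψ)).topologicalClosure = ⊤

/-- `ψ` is ω-independent: `∑ᵢ cᵢ ψᵢ = 0` (convergent in `H`) implies `cᵢ = 0` for all `i`. -/
def IsOmegaIndependent (ψ : I → H) : Prop :=
  ∀ c : I → ℂ, HasSum (fun i => c i • ψ i) 0 → ∀ i, c i = 0

/-- `φ` is biorthogonal to `ψ`: `⟨ψᵢ, φⱼ⟩ = δᵢⱼ`. -/
def IsBiorthogonal (ψ φ : I → H) : Prop :=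
  ∀ i j, ⟪ψ i, φ j⟫ = if i = j then 1 else 0

/-- `ψ` is exact: removing any single element strictly decreases the closed span. -/
def IsExactSeq (ψ : I → H) : Prop :=
  ∀ k : I, (Submodule.span ℂ (Set.range ψ)).topologicalClosure ≠
    (Submodule.span ℂ (ψ '' {i | i ≠ k})).topologicalClosure

/-- The domain of the synthesis operator of `ψ`: all `c ∈ ℓ²(I)` such that `∑ᵢ cᵢ ψᵢ`
converges in `H`. -/
def synthesisDomain (ψ : I → H) : Submodule ℂ (lp (fun _ : I => ℂ) 2) where
  carrier := {c | ∃ y : H, HasSum (fun i => c i • ψ i) y}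
  zero_mem' := ⟨0, by
    simpa [lp.coeFn_zero] using (hasSum_zero : HasSum (fun _ : I => (0 : H)) 0)⟩
  add_mem' := by
    rintro c d ⟨y, hy⟩ ⟨z, hz⟩
    exact ⟨y + z, by simpa [lp.coeFn_add, add_smul] using hy.add hz⟩
  smul_mem' := by
    rintro a c ⟨y, hy⟩
    exact ⟨a • y, by simpa [lp.coeFn_smul, smul_smul] using hy.const_smul a⟩

/-- The synthesis operator `D_ψ : ℓ²(I) ⊇ D(D_ψ) → H`, `c ↦ ∑ᵢ cᵢ ψᵢ`. -/
def synthesisOp (ψ : I → H) : (lp (fun _ : I => ℂ) 2) →ₗ.[ℂ] H where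
  domain := synthesisDomain ψ
  toFun :=
    { toFun := fun c => ∑' i, ((c : lp (fun _ : I => ℂ) 2) : ∀ _ : I, ℂ) i • ψ i
      map_add' := by
        rintro ⟨c, y, hy⟩ ⟨d, z, hz⟩
        have hyd : HasSum (fun i => ((c + d : lp (fun _ : I => ℂ) 2) : ∀ _ : I, ℂ) i • ψ i)
            (y + z) := by simpa [lp.coeFn_add, add_smul] using hy.add hz
        simp only [Submodule.coe_add]
        rw [hy.tsum_eq, hz.tsum_eq, hyd.tsum_eq]
      map_smul' := by
        rintro a ⟨c, y, hy⟩
        have hya : HasSum (fun i => ((a • c : lp (fun _ : I => ℂ) 2) : ∀ _ : I, ℂ) i • ψ i)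
            (a • y) := by simpa [lp.coeFn_smul, smul_smul] using hy.const_smul a
        simp only [SetLike.val_smul, RingHom.id_apply]
        rw [hy.tsum_eq, hya.tsum_eq] }

/-- The domain of the analysis operator of `ψ`: all `f ∈ H` with `(⟨f, ψᵢ⟩)ᵢ ∈ ℓ²(I)`. -/
def analysisDomain (ψ : I → H) : Submodule ℂ H where
  carrier := {f | Memℓp (fun i => ⟪ψ i, f⟫) 2}
  zero_mem' := by
    simp only [Set.mem_setOf_eq, inner_zero_right]
    exact (zero_memℓp : Memℓp (0 : ∀ _ : I, ℂ) 2)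
  add_mem' := by
    intro f g hf hg
    simp only [Set.mem_setOf_eq, inner_add_right]
    exact hf.add hg
  smul_mem' := by
    intro a f hf
    simpa [inner_smul_right] using hf.const_mul a

/-- The analysis operator `C_ψ : H ⊇ D(C_ψ) → ℓ²(I)`, `f ↦ (⟨f, ψᵢ⟩)ᵢ`. -/
def analysisOp (ψ : I → H) : H →ₗ.[ℂ] (lp (fun _ : I => ℂ) 2) where
  domain := analysisDomain ψ
  toFun :=
    { toFun := fun f => ⟨fun i => ⟪ψ i, (f : H)⟫, f.2⟩
      map_add' := by
        intro f g
        exact lp.ext (funext fun i => by simp [inner_add_right]; rfl)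
      map_smul' := by
        intro a f
        exact lp.ext (funext fun i => by simp [inner_smul_right]) }

end Seq

section Proj

variable {I : Type*} [Countable I]
variable {H : Type*} [NormedAddCommGroup H] [InnerProductSpace ℂ H] [CompleteSpace H]

/-- The space `H_ψ`: the closure of the domain of the analysis operator of `ψ`. -/
def hilPsi (ψ : I → H) : Submodule ℂ H := (analysisDomain ψ).topologicalClosure

instance hilPsi.instCompleteSpace (ψ : I → H) : CompleteSpace (hilPsi ψ) :=
  (Submodule.isClosed_topologicalClosure _).completeSpace_coe

/-- The projected sequence `π_{H_ψ} ψ`, regarded as a sequence in the Hilbert space `H_ψ`. -/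
def projSeq (ψ : I → H) : I → hilPsi ψ := fun i => (hilPsi ψ).orthogonalProjectionOnto (ψ i)

end Proj

variable {I : Type*} [Countable I]
section MyAux

variable {I : Type*} [Countable I]
variable {K : Type*} [NormedAddCommGroup K] [InnerProductSpace ℂ K] [CompleteSpace K]

/-- Norm-squared of an `ℓ²` element as a tsum. -/
lemma myLp.norm_sq_eq_tsum (t : lp (fun _ : I => ℂ) 2) :
    ‖t‖ ^ 2 = ∑' i, ‖t i‖ ^ 2 := by
  have h := lp.norm_rpow_eq_tsum (p := 2) (by norm_num) t
  have h2 : ((2 : ℝ≥0∞).toReal) = (2 : ℝ) := by norm_num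
  rw [h2] at h
  have : ∀ x : ℝ, x ^ (2 : ℝ) = x ^ 2 := fun x => by
    rw [show (2:ℝ) = ((2:ℕ):ℝ) by norm_num, Real.rpow_natCast]
  rw [this] at h
  rw [h]
  exact tsum_congr fun i => (this _)

lemma myLp.summable_norm_sq (t : lp (fun _ : I => ℂ) 2) :
    Summable fun i => ‖t i‖ ^ 2 := by
  have := lp.memℓp t
  rw [memℓp_gen_iff (by norm_num : 0 < (2:ℝ≥0∞).toReal)] at this
  have h2 : ((2 : ℝ≥0∞).toReal) = (2 : ℝ) := by norm_num
  rw [h2] at this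
  have heq : ∀ x : ℝ, x ^ (2 : ℝ) = x ^ 2 := fun x => by
    rw [show (2:ℝ) = ((2:ℕ):ℝ) by norm_num, Real.rpow_natCast]
  simpa [heq] using this

lemma myLp.sum_le_norm_sq (t : lp (fun _ : I => ℂ) 2) (s : Finset I) :
    ∑ i ∈ s, ‖t i‖ ^ 2 ≤ ‖t‖ ^ 2 := by
  rw [myLp.norm_sq_eq_tsum]
  exact (myLp.summable_norm_sq t).sum_le_tsum s (fun i _ => by positivity)

end MyAux
section MyAux2
set_option linter.unusedSectionVars false

variable {I : Type*} [Countable I]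
variable {K : Type*} [NormedAddCommGroup K] [InnerProductSpace ℂ K] [CompleteSpace K]

lemma finsupp_memℓp (c : I →₀ ℂ) : Memℓp (fun i => (c i : ℂ)) 2 := by
  apply memℓp_gen
  apply summable_of_ne_finset_zero (s := c.support)
  intro i hi
  rw [Finsupp.notMem_support_iff.mp hi]
  simp only [norm_zero]
  exact Real.zero_rpow (by norm_num)

/-- A finitely supported sequence as an element of `ℓ²`. -/
def finsuppLp (c : I →₀ ℂ) : lp (fun _ : I => ℂ) 2 := ⟨fun i => c i, finsupp_memℓp c⟩

@[simp] lemma finsuppLp_apply (c : I →₀ ℂ) (i : I) : finsuppLp c i = c i := rfl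

lemma finsuppLp_norm_sq (c : I →₀ ℂ) {s : Finset I} (hs : c.support ⊆ s) :
    ‖finsuppLp c‖ ^ 2 = ∑ i ∈ s, ‖c i‖ ^ 2 := by
  rw [myLp.norm_sq_eq_tsum]
  refine tsum_eq_sum fun i hi => ?_
  have : c i = 0 := Finsupp.notMem_support_iff.mp fun h => hi (hs h)
  simp [this]

lemma finsuppLp_hasSum (c : I →₀ ℂ) (φ : I → K) :
    HasSum (fun i => (finsuppLp c) i • φ i) (∑ i ∈ c.support, c i • φ i) := by
  apply hasSum_sum_of_ne_finset_zero
  intro i hi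
  have : c i = 0 := Finsupp.notMem_support_iff.mp hi
  simp [this]

end MyAux2
section MyAux3
set_option linter.unusedSectionVars false
set_option maxHeartbeats 1000000

variable {I : Type*} [Countable I]
variable {K : Type*} [NormedAddCommGroup K] [InnerProductSpace ℂ K] [CompleteSpace K]

lemma rf_linearIndependent {φ : I → K} {A : ℝ} (hA : 0 < A)
    (hrf : ∀ c : I →₀ ℂ, A * ∑ i ∈ c.support, ‖c i‖ ^ 2 ≤ ‖∑ i ∈ c.support, c i • φ i‖ ^ 2) :
    LinearIndependent ℂ φ := by
  rw [linearIndependent_iff]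
  intro l hl
  have h0 : (∑ i ∈ l.support, l i • φ i) = 0 := by
    rw [← hl, Finsupp.linearCombination_apply, Finsupp.sum]
  have hle := hrf l
  rw [h0, norm_zero] at hle
  have hsum0 : ∑ i ∈ l.support, ‖l i‖ ^ 2 = 0 := by
    have hnn : 0 ≤ ∑ i ∈ l.support, ‖l i‖ ^ 2 :=
      Finset.sum_nonneg fun i _ => by positivity
    nlinarith
  ext i
  by_cases hi : i ∈ l.support
  · have := (Finset.sum_eq_zero_iff_of_nonneg fun j _ => by positivity).mp hsum0 i hi
    have : ‖l i‖ = 0 := by nlinarith [norm_nonneg (l i)]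
    simpa using norm_eq_zero.mp this
  · simpa using Finsupp.notMem_support_iff.mp hi

/-- The moment problem: a Riesz-Fischer sequence admits, for every `ℓ²` target `t`,
a vector `f` with `⟪f, φ i⟫ = t i` and controlled norm. -/
lemma rf_moment {φ : I → K} {A : ℝ} (hA : 0 < A)
    (hrf : ∀ c : I →₀ ℂ, A * ∑ i ∈ c.support, ‖c i‖ ^ 2 ≤ ‖∑ i ∈ c.support, c i • φ i‖ ^ 2)
    (t : lp (fun _ : I => ℂ) 2) :
    ∃ f : K, (∀ i, ⟪f, φ i⟫ = t i) ∧ ‖f‖ ≤ (Real.sqrt A)⁻¹ * ‖t‖ := by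
  have hli : LinearIndependent ℂ φ := rf_linearIndependent hA hrf
  set V : Submodule ℂ K := Submodule.span ℂ (Set.range φ) with hV
  let L : V →ₗ[ℂ] ℂ := (Finsupp.linearCombination ℂ (fun i => (t i : ℂ))).comp hli.repr
  have hbound : ∀ x : V, ‖L x‖ ≤ ((Real.sqrt A)⁻¹ * ‖t‖) * ‖x‖ := by
    intro x
    set d : I →₀ ℂ := hli.repr x with hd
    have hLx : L x = ∑ i ∈ d.support, d i * t i := by
      simp only [L, LinearMap.comp_apply, Finsupp.linearCombination_apply, Finsupp.sum,
        smul_eq_mul, ← hd]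
    have h1 : ‖L x‖ ≤ ∑ i ∈ d.support, ‖d i‖ * ‖t i‖ := by
      rw [hLx]
      refine (norm_sum_le _ _).trans (le_of_eq ?_)
      exact Finset.sum_congr rfl fun i _ => norm_mul _ _
    have h2 : (∑ i ∈ d.support, ‖d i‖ * ‖t i‖) ^ 2 ≤
        (∑ i ∈ d.support, ‖d i‖ ^ 2) * (∑ i ∈ d.support, ‖t i‖ ^ 2) :=
      Finset.sum_mul_sq_le_sq_mul_sq _ _ _
    have h3 : ∑ i ∈ d.support, ‖t i‖ ^ 2 ≤ ‖t‖ ^ 2 := myLp.sum_le_norm_sq t _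
    have h4 : A * ∑ i ∈ d.support, ‖d i‖ ^ 2 ≤ ‖(x : K)‖ ^ 2 := by
      have hx : (∑ i ∈ d.support, d i • φ i) = (x : K) := by
        have := hli.linearCombination_repr x
        rwa [Finsupp.linearCombination_apply, Finsupp.sum] at this
      have := hrf d
      rwa [hx] at this
    have h5 : ∑ i ∈ d.support, ‖d i‖ ^ 2 ≤ A⁻¹ * ‖(x : K)‖ ^ 2 := by
      rw [inv_mul_eq_div, le_div_iff₀ hA]
      linarith [h4]
    have hsq : ‖L x‖ ^ 2 ≤ (A⁻¹ * ‖(x : K)‖ ^ 2) * ‖t‖ ^ 2 := by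
      calc ‖L x‖ ^ 2 ≤ (∑ i ∈ d.support, ‖d i‖ * ‖t i‖) ^ 2 := by
            apply pow_le_pow_left₀ (norm_nonneg _) h1
        _ ≤ (∑ i ∈ d.support, ‖d i‖ ^ 2) * (∑ i ∈ d.support, ‖t i‖ ^ 2) := h2
        _ ≤ (A⁻¹ * ‖(x : K)‖ ^ 2) * ‖t‖ ^ 2 := by
            apply mul_le_mul h5 h3 (Finset.sum_nonneg fun i _ => by positivity) (by positivity)
    have hrhs : (((Real.sqrt A)⁻¹ * ‖t‖) * ‖x‖) ^ 2 = (A⁻¹ * ‖(x : K)‖ ^ 2) * ‖t‖ ^ 2 := by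
      have hinv : ((Real.sqrt A)⁻¹) ^ 2 = A⁻¹ := by
        rw [inv_pow, Real.sq_sqrt hA.le]
      have hnx : ‖x‖ = ‖(x : K)‖ := rfl
      rw [hnx, mul_pow, mul_pow, hinv]; ring
    have h0 : (0:ℝ) ≤ ((Real.sqrt A)⁻¹ * ‖t‖) * ‖x‖ := by positivity
    nlinarith [hsq, hrhs, norm_nonneg (L x), h0]
  have hb0 : 0 ≤ (Real.sqrt A)⁻¹ * ‖t‖ := by positivity
  let F := LinearMap.mkContinuous L ((Real.sqrt A)⁻¹ * ‖t‖) hbound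
  obtain ⟨g, hg_ext, hg_norm⟩ := exists_extension_norm_eq V F
  refine ⟨(InnerProductSpace.toDual ℂ K).symm g, fun i => ?_, ?_⟩
  · have hmem : φ i ∈ V := Submodule.subset_span ⟨i, rfl⟩
    have hge : g (φ i) = F ⟨φ i, hmem⟩ := hg_ext ⟨φ i, hmem⟩
    rw [InnerProductSpace.toDual_symm_apply, hge]
    show L ⟨φ i, hmem⟩ = t i
    have hrepr : hli.repr ⟨φ i, hmem⟩ = Finsupp.single i 1 := hli.repr_eq_single i _ rfl
    simp [L, hrepr, Finsupp.linearCombination_single]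
  · rw [show ‖(InnerProductSpace.toDual ℂ K).symm g‖ = ‖g‖ from
      LinearIsometryEquiv.norm_map _ g, hg_norm]
    exact LinearMap.mkContinuous_norm_le L hb0 hbound

end MyAux3
section MyAux4
set_option linter.unusedSectionVars false
set_option maxHeartbeats 1000000

variable {I : Type*} [Countable I]
variable {K : Type*} [NormedAddCommGroup K] [InnerProductSpace ℂ K] [CompleteSpace K]

/-- A Riesz-Fischer sequence has its synthesis operator bounded below on its whole domain. -/
lemma rf_bddBelow_of_hasSum {φ : I → K} {A : ℝ} (hA : 0 < A)
    (hrf : ∀ c : I →₀ ℂ, A * ∑ i ∈ c.support, ‖c i‖ ^ 2 ≤ ‖∑ i ∈ c.support, c i • φ i‖ ^ 2)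
    (c : lp (fun _ : I => ℂ) 2) {S : K}
    (hS : HasSum (fun i => (c : ∀ _ : I, ℂ) i • φ i) S) :
    Real.sqrt A * ‖c‖ ≤ ‖S‖ := by
  obtain ⟨f, hf, hfn⟩ := rf_moment hA hrf (star c)
  have hfn' : ‖f‖ ≤ (Real.sqrt A)⁻¹ * ‖c‖ := by rwa [norm_star] at hfn
  have h1 : HasSum (fun i => ⟪f, (c : ∀ _ : I, ℂ) i • φ i⟫) ⟪f, S⟫ :=
    (innerSL ℂ f).hasSum hS
  have h2 : HasSum (fun i => ((‖(c : ∀ _ : I, ℂ) i‖ ^ 2 : ℝ) : ℂ)) ⟪f, S⟫ := by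
    have heq : (fun i => ⟪f, (c : ∀ _ : I, ℂ) i • φ i⟫) =
        fun i => ((‖(c : ∀ _ : I, ℂ) i‖ ^ 2 : ℝ) : ℂ) := funext fun i => by
      rw [inner_smul_right, hf i, lp.star_apply]
      push_cast
      exact RCLike.mul_conj (K := ℂ) _
    rwa [heq] at h1
  have h3 : HasSum (fun i => (‖(c : ∀ _ : I, ℂ) i‖ ^ 2 : ℝ)) (‖c‖ ^ 2) := by
    have := (myLp.summable_norm_sq c).hasSum
    rwa [← myLp.norm_sq_eq_tsum c] at this
  have h4 : HasSum (fun i => ((‖(c : ∀ _ : I, ℂ) i‖ ^ 2 : ℝ) : ℂ)) ((‖c‖ ^ 2 : ℝ) : ℂ) :=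
    Complex.ofRealCLM.hasSum h3
  have hinner : ⟪f, S⟫ = ((‖c‖ ^ 2 : ℝ) : ℂ) := h2.unique h4
  have h5 : ‖c‖ ^ 2 ≤ (Real.sqrt A)⁻¹ * ‖c‖ * ‖S‖ := by
    have := norm_inner_le_norm (𝕜 := ℂ) f S
    rw [hinner, Complex.norm_real, Real.norm_eq_abs, abs_of_nonneg (by positivity)] at this
    calc ‖c‖ ^ 2 ≤ ‖f‖ * ‖S‖ := this
      _ ≤ ((Real.sqrt A)⁻¹ * ‖c‖) * ‖S‖ :=
        mul_le_mul_of_nonneg_right hfn' (norm_nonneg _)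
  have hsp : 0 < Real.sqrt A := Real.sqrt_pos.mpr hA
  rcases eq_or_lt_of_le (norm_nonneg c) with hc | hc
  · rw [← hc, mul_zero]; exact norm_nonneg _
  · have h6 : Real.sqrt A * ‖c‖ ^ 2 ≤ ‖c‖ * ‖S‖ := by
      rw [show (Real.sqrt A)⁻¹ * ‖c‖ * ‖S‖ = (Real.sqrt A)⁻¹ * (‖c‖ * ‖S‖) by ring] at h5
      rw [← le_inv_mul_iff₀ hsp]
      exact h5
    nlinarith [h6, hc, hsp]

end MyAux4
section MyAux5
set_option linter.unusedSectionVars false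
set_option maxHeartbeats 1000000

variable {I : Type*} [Countable I]
variable {K : Type*} [NormedAddCommGroup K] [InnerProductSpace ℂ K] [CompleteSpace K]

lemma mem_synthesisDomain_iff {φ : I → K} {c : lp (fun _ : I => ℂ) 2} :
    c ∈ synthesisDomain φ ↔ ∃ y : K, HasSum (fun i => (c : ∀ _ : I, ℂ) i • φ i) y :=
  Iff.rfl

lemma synthesisOp_apply {φ : I → K} (x : (synthesisOp φ).domain) :
    synthesisOp φ x = ∑' i, ((x : lp (fun _ : I => ℂ) 2) : ∀ _ : I, ℂ) i • φ i := rfl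

lemma synthesisOp_apply_eq {φ : I → K} (x : (synthesisOp φ).domain) {y : K}
    (hy : HasSum (fun i => ((x : lp (fun _ : I => ℂ) 2) : ∀ _ : I, ℂ) i • φ i) y) :
    synthesisOp φ x = y := by
  rw [synthesisOp_apply]; exact hy.tsum_eq

lemma graph_hasSum {φ : I → K} {q : (lp (fun _ : I => ℂ) 2) × K}
    (hq : q ∈ (synthesisOp φ).graph) :
    HasSum (fun i => (q.1 : ∀ _ : I, ℂ) i • φ i) q.2 := by
  rw [LinearPMap.mem_graph_iff] at hq
  obtain ⟨d, hd1, hd2⟩ := hq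
  obtain ⟨y, hy⟩ := d.2
  have hTd : synthesisOp φ d = y := synthesisOp_apply_eq d hy
  rw [← hd1, ← hd2, hTd]
  exact hy

/-- Transfer of a lower bound from the graph to the graph of the closure. -/
lemma closure_graph_bddBelow {T : (lp (fun _ : I => ℂ) 2) →ₗ.[ℂ] K} (hT : T.IsClosable)
    {m : ℝ} (h : ∀ q ∈ T.graph, m * ‖q.1‖ ≤ ‖q.2‖) :
    ∀ q ∈ T.closure.graph, m * ‖q.1‖ ≤ ‖q.2‖ := by
  intro q hq
  rw [← hT.graph_closure_eq_closure_graph] at hq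
  have hq' : q ∈ closure (T.graph : Set _) := hq
  have hC : IsClosed {p : (lp (fun _ : I => ℂ) 2) × K | m * ‖p.1‖ ≤ ‖p.2‖} :=
    isClosed_le (continuous_const.mul (continuous_norm.comp continuous_fst))
      (continuous_norm.comp continuous_snd)
  exact closure_minimal (fun p hp => h p hp) hC hq'

/-- Component version of `closure_graph_bddBelow`. -/
lemma closure_graph_bddBelow' {T : (lp (fun _ : I => ℂ) 2) →ₗ.[ℂ] K} (hT : T.IsClosable)
    {m : ℝ} (h : ∀ q ∈ T.graph, m * ‖q.1‖ ≤ ‖q.2‖) (c : lp (fun _ : I => ℂ) 2) (y : K)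
    (hq : (c, y) ∈ T.closure.graph) : m * ‖c‖ ≤ ‖y‖ :=
  closure_graph_bddBelow hT h (c, y) hq

end MyAux5
section MyAux6
set_option linter.unusedSectionVars false
set_option maxHeartbeats 1000000
set_option synthInstance.maxHeartbeats 1000000

variable {I : Type*} [Countable I]
variable {H : Type*} [NormedAddCommGroup H] [InnerProductSpace ℂ H] [CompleteSpace H]

lemma inner_projSeq (ψ : I → H) (fK : hilPsi ψ) (i : I) :
    ⟪fK, projSeq ψ i⟫ = ⟪(fK : H), ψ i⟫ := by
  have h1 : (⟪fK, projSeq ψ i⟫ : ℂ) = ⟪(fK : H), ((projSeq ψ i : H))⟫ :=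
    Submodule.coe_inner _ _ _
  have h2 : ψ i - (projSeq ψ i : H) ∈ (hilPsi ψ)ᗮ :=
    Submodule.sub_starProjection_mem_orthogonal _
  have h3 : ⟪(fK : H), ψ i - (projSeq ψ i : H)⟫ = 0 :=
    (Submodule.mem_orthogonal _ _).mp h2 _ fK.2
  rw [inner_sub_right] at h3
  rw [h1]
  linear_combination -h3

/-- The analysis coefficients of `f ∈ D(C_ψ)` as an element of `ℓ²`. -/
def analysisLp (ψ : I → H) (f : H) (hf : f ∈ analysisDomain ψ) : lp (fun _ : I => ℂ) 2 :=
  ⟨fun i => ⟪ψ i, f⟫, hf⟩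

lemma mem_hilPsi_of_mem_analysisDomain {ψ : I → H} {f : H} (hf : f ∈ analysisDomain ψ) :
    f ∈ hilPsi ψ :=
  Submodule.le_topologicalClosure _ hf

/-- Key duality: for `f ∈ D(C_ψ)` and `c` in the domain of the restricted synthesis operator,
`⟪f, D c⟫ = ⟪C f, c⟫`. -/
lemma inner_synthesis_eq {ψ : I → H} {f : H} (hf : f ∈ analysisDomain ψ)
    (c : lp (fun _ : I => ℂ) 2) {y : hilPsi ψ}
    (hy : HasSum (fun i => (c : ∀ _ : I, ℂ) i • projSeq ψ i) y) :
    ⟪(⟨f, mem_hilPsi_of_mem_analysisDomain hf⟩ : hilPsi ψ), y⟫ = ⟪analysisLp ψ f hf, c⟫ := by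
  set fK : hilPsi ψ := ⟨f, mem_hilPsi_of_mem_analysisDomain hf⟩
  have h1 : HasSum (fun i => ⟪fK, (c : ∀ _ : I, ℂ) i • projSeq ψ i⟫) ⟪fK, y⟫ :=
    (innerSL ℂ fK).hasSum hy
  have h2 : HasSum (fun i => ⟪(analysisLp ψ f hf) i, (c : ∀ _ : I, ℂ) i⟫)
      ⟪analysisLp ψ f hf, c⟫ := lp.hasSum_inner _ _
  refine h1.unique (h2.congr_fun fun i => ?_)
  have ha : (analysisLp ψ f hf) i = ⟪ψ i, f⟫ := rfl
  rw [inner_smul_right, inner_projSeq, RCLike.inner_apply, ha,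
    inner_conj_symm]

lemma synthesisOp_projSeq_isClosable (ψ : I → H) :
    (synthesisOp (projSeq ψ)).IsClosable := by
  set T := synthesisOp (projSeq ψ) with hT
  refine ⟨(T.graph.topologicalClosure).toLinearPMap,
    (Submodule.toLinearPMap_graph_eq _ ?_).symm⟩
  intro x hx h0
  have hx' : x ∈ closure (T.graph : Set _) := hx
  obtain ⟨p, hp, hlim⟩ := mem_closure_iff_seq_limit.mp hx'
  -- the second coordinate of `x` is orthogonal to the analysis domain
  have horth : ∀ f ∈ analysisDomain ψ, ⟪f, ((x.2 : hilPsi ψ) : H)⟫ = 0 := by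
    intro f hf
    set fK : hilPsi ψ := ⟨f, mem_hilPsi_of_mem_analysisDomain hf⟩
    have hinner : ∀ n, ⟪fK, (p n).2⟫ = ⟪analysisLp ψ f hf, (p n).1⟫ := by
      intro n
      exact inner_synthesis_eq hf (p n).1 (graph_hasSum (hp n))
    have hlim2 : Filter.Tendsto (fun n => (p n).2) Filter.atTop (nhds x.2) :=
      ((continuous_snd.tendsto x).comp hlim)
    have hlim1 : Filter.Tendsto (fun n => (p n).1) Filter.atTop (nhds x.1) :=
      ((continuous_fst.tendsto x).comp hlim)
    have hL : Filter.Tendsto (fun n => ⟪fK, (p n).2⟫) Filter.atTop (nhds ⟪fK, x.2⟫) :=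
      tendsto_const_nhds.inner hlim2
    have hR : Filter.Tendsto (fun n => ⟪analysisLp ψ f hf, (p n).1⟫) Filter.atTop
        (nhds ⟪analysisLp ψ f hf, x.1⟫) := tendsto_const_nhds.inner hlim1
    have heq : ⟪fK, x.2⟫ = ⟪analysisLp ψ f hf, x.1⟫ := by
      refine tendsto_nhds_unique ?_ hR
      exact hL.congr fun n => (hinner n)
    rw [h0, inner_zero_right] at heq
    have : ⟪fK, x.2⟫ = ⟪(fK : H), ((x.2 : hilPsi ψ) : H)⟫ := Submodule.coe_inner _ _ _
    rw [← this, heq]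
  -- conclude x.2 = 0
  have hmem2 : ((x.2 : hilPsi ψ) : H) ∈ closure ((analysisDomain ψ : Set H)) := x.2.2
  obtain ⟨g, hg, hglim⟩ := mem_closure_iff_seq_limit.mp hmem2
  have : ⟪((x.2 : hilPsi ψ) : H), ((x.2 : hilPsi ψ) : H)⟫ = 0 := by
    have hT2 : Filter.Tendsto (fun n => ⟪g n, ((x.2 : hilPsi ψ) : H)⟫) Filter.atTop
        (nhds ⟪((x.2 : hilPsi ψ) : H), ((x.2 : hilPsi ψ) : H)⟫) :=
      hglim.inner tendsto_const_nhds
    have hzero : ∀ n, ⟪g n, ((x.2 : hilPsi ψ) : H)⟫ = 0 := fun n => horth _ (hg n)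
    exact tendsto_nhds_unique hT2
      (Filter.Tendsto.congr (fun n => (hzero n).symm) tendsto_const_nhds)
  have : ((x.2 : hilPsi ψ) : H) = 0 := inner_self_eq_zero.mp this
  exact Subtype.coe_injective this

end MyAux6
section MyAux7
set_option linter.unusedSectionVars false
set_option maxHeartbeats 1000000
set_option synthInstance.maxHeartbeats 1000000

variable {I : Type*} [Countable I]
variable {H : Type*} [NormedAddCommGroup H] [InnerProductSpace ℂ H] [CompleteSpace H]

lemma impl_c_to_b (ψ : I → H) (h : IsRieszFischerSeq (projSeq ψ)) :
    (synthesisOp (projSeq ψ)).closure.Inj ∧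
      IsClosed ((synthesisOp (projSeq ψ)).closure.ran : Set (hilPsi ψ)) := by
  obtain ⟨A, hA, hrf⟩ := h
  set T := synthesisOp (projSeq ψ) with hTdef
  have hcl := synthesisOp_projSeq_isClosable ψ
  have hgr : ∀ q ∈ T.graph, Real.sqrt A * ‖q.1‖ ≤ ‖q.2‖ := fun q hq =>
    rf_bddBelow_of_hasSum hA hrf q.1 (graph_hasSum hq)
  have hbb := closure_graph_bddBelow' hcl hgr
  have hsp : 0 < Real.sqrt A := Real.sqrt_pos.mpr hA
  constructor
  · intro x y hxy
    have hmem : (((x : lp (fun _ : I => ℂ) 2) - (y : lp (fun _ : I => ℂ) 2)),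
        T.closure x - T.closure y) ∈ T.closure.graph :=
      Submodule.sub_mem _ (T.closure.mem_graph x) (T.closure.mem_graph y)
    have hb := hbb _ _ hmem
    rw [hxy, sub_self, norm_zero] at hb
    have hxynorm : ‖(x : lp (fun _ : I => ℂ) 2) - (y : lp (fun _ : I => ℂ) 2)‖ = 0 := by
      nlinarith [norm_nonneg ((x : lp (fun _ : I => ℂ) 2) - (y : lp (fun _ : I => ℂ) 2))]
    exact Subtype.coe_injective (sub_eq_zero.mp (norm_eq_zero.mp hxynorm))
  · have hgraph_closed : IsClosed (T.closure.graph : Set ((lp (fun _ : I => ℂ) 2) × hilPsi ψ)) :=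
      hcl.closure_isClosed
    refine isClosed_of_closure_subset ?_
    intro y hy
    obtain ⟨g, hg, hglim⟩ := mem_closure_iff_seq_limit.mp hy
    choose xs hxs using hg
    have hkey2 : ∀ a b : ℕ, Real.sqrt A *
        ‖(xs a : lp (fun _ : I => ℂ) 2) - (xs b : lp (fun _ : I => ℂ) 2)‖ ≤ ‖g a - g b‖ := by
      intro a b
      have hmem : (((xs a : lp (fun _ : I => ℂ) 2) - (xs b : lp (fun _ : I => ℂ) 2)),
          T.closure (xs a) - T.closure (xs b)) ∈ T.closure.graph :=
        Submodule.sub_mem _ (T.closure.mem_graph _) (T.closure.mem_graph _)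
      have hb := hbb _ _ hmem
      have hga : T.closure (xs a) = g a := hxs a
      have hgb : T.closure (xs b) = g b := hxs b
      rwa [hga, hgb] at hb
    have hgc : CauchySeq g := hglim.cauchySeq
    have hxc : CauchySeq (fun n => (xs n : lp (fun _ : I => ℂ) 2)) := by
      rw [Metric.cauchySeq_iff]
      intro ε hε
      obtain ⟨N, hN⟩ := Metric.cauchySeq_iff.mp hgc (Real.sqrt A * ε) (by positivity)
      refine ⟨N, fun a ha b hb => ?_⟩
      have h1 := hkey2 a b
      have h2 := hN a ha b hb
      rw [dist_eq_norm] at h2 ⊢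
      nlinarith [hsp]
    obtain ⟨x, hx⟩ := cauchySeq_tendsto_of_complete hxc
    have hmemg : ∀ n, ((xs n : lp (fun _ : I => ℂ) 2), g n) ∈ T.closure.graph := fun n => by
      rw [← hxs n]; exact T.closure.mem_graph _
    have hpair : Filter.Tendsto (fun n => ((xs n : lp (fun _ : I => ℂ) 2), g n))
        Filter.atTop (nhds (x, y)) := hx.prodMk_nhds hglim
    have hxy_mem : (x, y) ∈ T.closure.graph :=
      hgraph_closed.mem_of_tendsto hpair (Filter.Eventually.of_forall hmemg)
    rw [LinearPMap.mem_graph_iff] at hxy_mem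
    obtain ⟨d, _, hd2⟩ := hxy_mem
    exact ⟨d, hd2⟩

lemma impl_b_to_c (ψ : I → H)
    (h : (synthesisOp (projSeq ψ)).closure.Inj ∧
      IsClosed ((synthesisOp (projSeq ψ)).closure.ran : Set (hilPsi ψ))) :
    IsRieszFischerSeq (projSeq ψ) := by
  obtain ⟨hinj, hran⟩ := h
  set T := synthesisOp (projSeq ψ) with hTdef
  have hcl := synthesisOp_projSeq_isClosable ψ
  set Tc := T.closure with hTc
  set R : Submodule ℂ (hilPsi ψ) := LinearMap.range Tc.toFun with hR
  have hRset : (R : Set (hilPsi ψ)) = Tc.ran := by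
    rw [hR, LinearMap.coe_range]; rfl
  have hRclosed : IsClosed (R : Set (hilPsi ψ)) := by rw [hRset]; exact hran
  haveI : CompleteSpace R := hRclosed.completeSpace_coe
  have hmem : ∀ y : R, ∃ x : Tc.domain, Tc x = (y : hilPsi ψ) := fun y =>
    LinearMap.mem_range.mp y.2
  choose s hs using hmem
  have hs_uniq : ∀ (y : R) (d : Tc.domain), Tc d = (y : hilPsi ψ) → s y = d := fun y d hd =>
    hinj _ _ (by rw [hs y, hd])
  let Sinv : R →ₗ[ℂ] lp (fun _ : I => ℂ) 2 :=
    { toFun := fun y => (s y : lp (fun _ : I => ℂ) 2)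
      map_add' := fun y z => by
        have hadd : s (y + z) = s y + s z :=
          hs_uniq (y + z) (s y + s z) (by rw [Tc.map_add, hs, hs]; rfl)
        show ((s (y + z) : lp (fun _ : I => ℂ) 2)) = (s y : lp (fun _ : I => ℂ) 2) + (s z : lp (fun _ : I => ℂ) 2)
        rw [hadd]; rfl
      map_smul' := fun a y => by
        have hsm : s (a • y) = a • s y :=
          hs_uniq (a • y) (a • s y) (by rw [Tc.map_smul, hs]; rfl)
        show ((s (a • y) : lp (fun _ : I => ℂ) 2)) = a • (s y : lp (fun _ : I => ℂ) 2)
        rw [hsm]; rfl }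
  have hgraph_closed_Tc : IsClosed (Tc.graph : Set ((lp (fun _ : I => ℂ) 2) × hilPsi ψ)) :=
    hcl.closure_isClosed
  have hsetg : (Sinv.graph : Set (R × lp (fun _ : I => ℂ) 2)) =
      (fun p : R × lp (fun _ : I => ℂ) 2 => (p.2, (p.1 : hilPsi ψ))) ⁻¹'
        (Tc.graph : Set ((lp (fun _ : I => ℂ) 2) × hilPsi ψ)) := by
    ext p
    simp only [Set.mem_preimage, SetLike.mem_coe, LinearMap.mem_graph_iff]
    constructor
    · intro hp
      rw [hp]
      show ((s p.1 : lp (fun _ : I => ℂ) 2), (p.1 : hilPsi ψ)) ∈ Tc.graph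
      rw [← hs p.1]
      exact Tc.mem_graph _
    · intro hp
      rw [LinearPMap.mem_graph_iff] at hp
      obtain ⟨d, hd1, hd2⟩ := hp
      have hsd : s p.1 = d := hs_uniq _ _ hd2
      show p.2 = (s p.1 : lp (fun _ : I => ℂ) 2)
      rw [hsd]
      exact hd1.symm
  have hgclosed : IsClosed (Sinv.graph : Set (R × lp (fun _ : I => ℂ) 2)) := by
    rw [hsetg]
    exact IsClosed.preimage (Continuous.prodMk continuous_snd
      (continuous_subtype_val.comp continuous_fst)) hgraph_closed_Tc
  have hcont : Continuous Sinv := Sinv.continuous_of_isClosed_graph hgclosed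
  let SC : R →L[ℂ] lp (fun _ : I => ℂ) 2 := ⟨Sinv, hcont⟩
  set C := ‖SC‖ with hCdef
  have hC0 : (0:ℝ) ≤ C := by rw [hCdef]; exact norm_nonneg SC
  have hkey : ∀ x : Tc.domain, ‖(x : lp (fun _ : I => ℂ) 2)‖ ≤ C * ‖Tc x‖ := by
    intro x
    have hxR : Tc x ∈ R := LinearMap.mem_range_self _ x
    have hsx : s ⟨Tc x, hxR⟩ = x := hs_uniq _ _ rfl
    have hop := SC.le_opNorm ⟨Tc x, hxR⟩
    rw [show SC ⟨Tc x, hxR⟩ = (s ⟨Tc x, hxR⟩ : lp (fun _ : I => ℂ) 2) from rfl, hsx] at hop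
    exact hop
  refine ⟨((C + 1) ^ 2)⁻¹, by positivity, fun c => ?_⟩
  have hsum := finsuppLp_hasSum c (projSeq ψ)
  have hdom : finsuppLp c ∈ synthesisDomain (projSeq ψ) := ⟨_, hsum⟩
  let x0 : T.domain := ⟨finsuppLp c, hdom⟩
  have hx0 : T x0 = ∑ i ∈ c.support, c i • projSeq ψ i := synthesisOp_apply_eq x0 hsum
  have hle := T.le_closure
  let x1 : Tc.domain := ⟨finsuppLp c, hle.1 hdom⟩
  have hx1 : Tc x1 = ∑ i ∈ c.support, c i • projSeq ψ i := by
    rw [← hx0]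
    exact (hle.2 rfl).symm
  have h1 : ‖finsuppLp c‖ ≤ (C + 1) * ‖∑ i ∈ c.support, c i • projSeq ψ i‖ := by
    have hk := hkey x1
    rw [hx1] at hk
    have h2 : C * ‖∑ i ∈ c.support, c i • projSeq ψ i‖ ≤
        (C + 1) * ‖∑ i ∈ c.support, c i • projSeq ψ i‖ :=
      mul_le_mul_of_nonneg_right (by linarith) (norm_nonneg _)
    exact hk.trans h2
  have hns : ‖finsuppLp c‖ ^ 2 = ∑ i ∈ c.support, ‖c i‖ ^ 2 :=
    finsuppLp_norm_sq c (le_refl _)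
  rw [inv_mul_le_iff₀ (by positivity)]
  rw [← hns]
  nlinarith [h1, norm_nonneg (finsuppLp c),
    norm_nonneg (∑ i ∈ c.support, c i • projSeq ψ i), hC0]

end MyAux7
section MyAux8
set_option linter.unusedSectionVars false
set_option maxHeartbeats 1000000
set_option synthInstance.maxHeartbeats 1000000

variable {I : Type*} [Countable I]
variable {H : Type*} [NormedAddCommGroup H] [InnerProductSpace ℂ H] [CompleteSpace H]

lemma impl_a_to_c (ψ : I → H) (h : IsRieszFischerSeq ψ) : IsRieszFischerSeq (projSeq ψ) := by
  obtain ⟨A, hA, hrf⟩ := h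
  refine ⟨A, hA, fun c => ?_⟩
  set c' : I →₀ ℂ := c.mapRange (starRingEnd ℂ) (map_zero _) with hc'
  set t := finsuppLp c' with ht
  obtain ⟨f, hf, hfn⟩ := rf_moment hA hrf t
  have hft : ∀ i, ⟪f, ψ i⟫ = (starRingEnd ℂ) (c i) := by
    intro i
    rw [hf i]
    simp [ht, hc', Finsupp.mapRange_apply]
  have hfa : f ∈ analysisDomain ψ := by
    show Memℓp (fun i => ⟪ψ i, f⟫) 2
    have heq : (fun i => ⟪ψ i, f⟫) = fun i => (c i : ℂ) := funext fun i => by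
      rw [← inner_conj_symm, hft i]
      simp
    rw [heq]
    exact finsupp_memℓp c
  set fK : hilPsi ψ := (⟨f, mem_hilPsi_of_mem_analysisDomain hfa⟩ : hilPsi ψ) with hfK
  set S := ∑ i ∈ c.support, c i • projSeq ψ i with hS
  set B := ∑ i ∈ c.support, ‖c i‖ ^ 2 with hB
  have hBnn : 0 ≤ B := Finset.sum_nonneg fun i _ => by positivity
  have hinner : ⟪fK, S⟫ = ((B : ℝ) : ℂ) := by
    rw [hS, inner_sum]
    have hterm : ∀ i ∈ c.support, ⟪fK, c i • projSeq ψ i⟫ = ((‖c i‖ ^ 2 : ℝ) : ℂ) := by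
      intro i _
      rw [inner_smul_right, inner_projSeq]
      show (c i) * ⟪f, ψ i⟫ = _
      rw [hft i]
      push_cast
      exact RCLike.mul_conj (K := ℂ) _
    rw [Finset.sum_congr rfl hterm, hB]
    push_cast
    rfl
  have htn : ‖t‖ ^ 2 = B := by
    rw [ht, finsuppLp_norm_sq c' Finsupp.support_mapRange, hB]
    refine Finset.sum_congr rfl fun i _ => ?_
    rw [hc', Finsupp.mapRange_apply]
    simp
  have h5 : B ≤ (Real.sqrt A)⁻¹ * ‖t‖ * ‖S‖ := by
    have hni := norm_inner_le_norm (𝕜 := ℂ) fK S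
    rw [hinner, Complex.norm_real, Real.norm_eq_abs, abs_of_nonneg hBnn] at hni
    have hfKn : ‖fK‖ = ‖f‖ := rfl
    calc B ≤ ‖fK‖ * ‖S‖ := hni
      _ ≤ ((Real.sqrt A)⁻¹ * ‖t‖) * ‖S‖ := by
          rw [hfKn]
          exact mul_le_mul_of_nonneg_right hfn (norm_nonneg _)
  have hsA : 0 < Real.sqrt A := Real.sqrt_pos.mpr hA
  show A * B ≤ ‖S‖ ^ 2
  rcases eq_or_lt_of_le hBnn with hB0 | hB0
  · rw [← hB0, mul_zero]
    positivity
  · have hsB : 0 < Real.sqrt B := Real.sqrt_pos.mpr hB0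
    have hBs : Real.sqrt B * Real.sqrt B = B := Real.mul_self_sqrt hBnn
    have ht0 : ‖t‖ = Real.sqrt B := by
      rw [← htn, Real.sqrt_sq (norm_nonneg t)]
    have h7 : Real.sqrt A * B ≤ Real.sqrt B * ‖S‖ := by
      have h7a := mul_le_mul_of_nonneg_left h5 hsA.le
      calc Real.sqrt A * B ≤ Real.sqrt A * ((Real.sqrt A)⁻¹ * ‖t‖ * ‖S‖) := h7a
        _ = ‖t‖ * ‖S‖ := by field_simp
        _ = Real.sqrt B * ‖S‖ := by rw [ht0]
    have h8 : Real.sqrt A * Real.sqrt B ≤ ‖S‖ := by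
      have h9 : (Real.sqrt A * Real.sqrt B) * Real.sqrt B ≤ ‖S‖ * Real.sqrt B := by
        rw [mul_assoc, hBs]
        linarith [h7]
      exact le_of_mul_le_mul_right h9 hsB
    have h10 : (Real.sqrt A * Real.sqrt B) ^ 2 ≤ ‖S‖ ^ 2 :=
      pow_le_pow_left₀ (by positivity) h8 2
    rw [mul_pow, Real.sq_sqrt hA.le, Real.sq_sqrt hBnn] at h10
    exact h10

lemma norm_sum_projSeq_eq (ψ : I → H) (c : I →₀ ℂ) :
    ‖∑ i ∈ c.support, c i • projSeq ψ i‖ = ‖∑ i ∈ c.support, c i • (projSeq ψ i : H)‖ := by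
  have hco : ((∑ i ∈ c.support, c i • projSeq ψ i : hilPsi ψ) : H) =
      ∑ i ∈ c.support, c i • (projSeq ψ i : H) := by
    push_cast
    rfl
  rw [← hco]
  rfl

lemma impl_c_iff_d (ψ : I → H) :
    IsRieszFischerSeq (projSeq ψ) ↔ IsRieszFischerSeq (fun i => (projSeq ψ i : H)) := by
  constructor <;> rintro ⟨A, hA, h⟩ <;> refine ⟨A, hA, fun c => ?_⟩
  · rw [← norm_sum_projSeq_eq]
    exact h c
  · rw [norm_sum_projSeq_eq]
    exact h c

lemma impl_d_to_a (ψ : I → H) (h : IsRieszFischerSeq (fun i => (projSeq ψ i : H))) :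
    IsRieszFischerSeq ψ := by
  obtain ⟨A, hA, hrf⟩ := h
  refine ⟨A, hA, fun c => ?_⟩
  have h1 := hrf c
  set Q : H →L[ℂ] H := (hilPsi ψ).subtypeL.comp ((hilPsi ψ).orthogonalProjectionOnto) with hQ
  have h2 : ∑ i ∈ c.support, c i • (projSeq ψ i : H) = Q (∑ i ∈ c.support, c i • ψ i) := by
    rw [map_sum]
    refine Finset.sum_congr rfl fun i _ => ?_
    rw [map_smul]
    rfl
  have h3 : ‖Q (∑ i ∈ c.support, c i • ψ i)‖ ≤ ‖∑ i ∈ c.support, c i • ψ i‖ := by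
    set v := ∑ i ∈ c.support, c i • ψ i
    calc ‖Q v‖ = ‖(hilPsi ψ).orthogonalProjectionOnto v‖ := rfl
      _ ≤ ‖((hilPsi ψ).orthogonalProjectionOnto : H →L[ℂ] hilPsi ψ)‖ * ‖v‖ :=
          ContinuousLinearMap.le_opNorm _ _
      _ ≤ 1 * ‖v‖ := mul_le_mul_of_nonneg_right (Submodule.orthogonalProjectionOnto_norm_le _) (norm_nonneg _)
      _ = ‖v‖ := one_mul _
  calc A * ∑ i ∈ c.support, ‖c i‖ ^ 2 ≤ ‖∑ i ∈ c.support, c i • (projSeq ψ i : H)‖ ^ 2 := h1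
    _ = ‖Q (∑ i ∈ c.support, c i • ψ i)‖ ^ 2 := by rw [h2]
    _ ≤ ‖∑ i ∈ c.support, c i • ψ i‖ ^ 2 := pow_le_pow_left₀ (norm_nonneg _) h3 2

end MyAux8
variable {H : Type*} [NormedAddCommGroup H] [InnerProductSpace ℂ H] [CompleteSpace H]
  [SeparableSpace H]

theorem statement14 (ψ : I → H) :
    List.TFAE [IsRieszFischerSeq ψ,
      (synthesisOp (projSeq ψ)).closure.Inj ∧
        IsClosed ((synthesisOp (projSeq ψ)).closure.ran : Set (hilPsi ψ)),
      IsRieszFischerSeq (projSeq ψ),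
      IsRieszFischerSeq (fun i => (projSeq ψ i : H))] := by
  tfae_have 1 → 3 := impl_a_to_c ψ
  tfae_have 3 → 2 := impl_c_to_b ψ
  tfae_have 2 → 3 := impl_b_to_c ψ
  tfae_have 3 → 4 := (impl_c_iff_d ψ).mp
  tfae_have 4 → 1 := impl_d_to_a ψ
  tfae_finish
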